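/- Let K ≥ 1 be an integer, p₁,…,p_K positive real numbers, and L*, L integers with 1 ≤ L* ≤ L ≤ K. Let δ₁,…,δ_K be real numbers with δ_i ≥ 2 for i ≤ L and δ_i ≥ 1 for L < i ≤ K, let n ≥ 0 be a real number, and let ν₁,…,ν_K be real numbers satisfying Σ_{i=1}^{K} p_i ν_i > n·Σ_{i=1}^{K} p_i δ_i. Then 2·Σ_{i=1}^{L*} p_i ν_i² + Σ_{i=L*+1}^{K} p_i ν_i² > 4n²·Σ_{i=1}^{L} p_i. -/

import Mathlib

/-! Weighting the terms with `i ≤ L*` by `c_i = 2` and the others by `c_i = 1`, Cauchy–Schwarz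
gives `(∑ p ν)² ≤ (∑ c p ν²)(∑ p / c)`, and `∑ p / c ≤ ∑ p = P_L + P_U`, where `P_L`, `P_U`
are the sums of `p` over `i ≤ L` and `i > L`. The Noether–Fano inequality gives
`∑ p ν > n (2 P_L + P_U)`, and `(2 P_L + P_U)² = 4 P_L (P_L + P_U) + P_U²`, so
`4 n² P_L (∑ p / c) < (∑ c p ν²)(∑ p / c)`. -/

open Finset

theorem Finset.sum_Icc_consecutive {M : Type*} [AddCommMonoid M] (f : ℕ → M) {a m b : ℕ}
    (ham : a ≤ m + 1) (hmb : m ≤ b) :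
    ∑ i ∈ Icc a m, f i + ∑ i ∈ Icc (m + 1) b, f i = ∑ i ∈ Icc a b, f i := by
  simp only [← Ico_add_one_right_eq_Icc]
  exact sum_Ico_consecutive f ham (by omega)

theorem sum_Icc_ite_le_mul {M : Type*} [NonAssocSemiring M] (c : M) (f : ℕ → M)
    {m b : ℕ} (hmb : m ≤ b) :
    ∑ i ∈ Icc 1 b, (if i ≤ m then c else 1) * f i =
      c * ∑ i ∈ Icc 1 m, f i + ∑ i ∈ Icc (m + 1) b, f i := by
  rw [← sum_Icc_consecutive _ (Nat.le_add_left 1 m) hmb, mul_sum]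
  congr 1 <;> refine sum_congr rfl fun i hi => ?_ <;> rw [mem_Icc] at hi
  · rw [if_pos hi.2]
  · rw [if_neg (by omega), one_mul]

theorem sq_sum_mul_le_sum_mul_sq_mul_sum_div {ι : Type*} (s : Finset ι) (p c ν : ι → ℝ)
    (hp : ∀ i ∈ s, 0 ≤ p i) (hc : ∀ i ∈ s, 0 < c i) :
    (∑ i ∈ s, p i * ν i) ^ 2 ≤ (∑ i ∈ s, c i * (p i * ν i ^ 2)) * ∑ i ∈ s, p i / c i := by
  refine sum_sq_le_sum_mul_sum_of_sq_le_mul s (fun i hi => ?_) (fun i hi => ?_) fun i hi => ?_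
  · have := hp i hi; have := hc i hi; positivity
  · exact div_nonneg (hp i hi) (hc i hi).le
  · field_simp [(hc i hi).ne']
    exact le_of_eq (by ring)

theorem four_mul_sq_mul_lt_of_sq_le {n P Q W S T : ℝ} (hn : 0 ≤ n) (hP : 0 ≤ P) (hQ : 0 ≤ Q)
    (hW : 0 ≤ W) (hWPQ : W ≤ P + Q) (hS : n * (2 * P + Q) < S) (hST : S ^ 2 ≤ T * W) :
    4 * n ^ 2 * P < T := by
  refine lt_of_mul_lt_mul_right ?_ hW
  calc 4 * n ^ 2 * P * W ≤ 4 * n ^ 2 * P * (P + Q) := by gcongr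
    _ ≤ (n * (2 * P + Q)) ^ 2 := by nlinarith [sq_nonneg (n * Q)]
    _ < S ^ 2 := by gcongr
    _ ≤ T * W := hST

theorem stmt_6_general (K Lstar L : ℕ)
    (hLsL : Lstar ≤ L) (hLK : L ≤ K)
    (p δ ν : ℕ → ℝ)
    (hp : ∀ i ∈ Icc 1 K, 0 < p i)
    (hδl : ∀ i ∈ Icc 1 L, 2 ≤ δ i)
    (hδu : ∀ i ∈ Icc (L + 1) K, 1 ≤ δ i)
    (n : ℝ) (hn : 0 ≤ n)
    (hNF : ∑ i ∈ Icc 1 K, p i * ν i > n * ∑ i ∈ Icc 1 K, p i * δ i) :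
    2 * ∑ i ∈ Icc 1 Lstar, p i * ν i ^ 2 +
      ∑ i ∈ Icc (Lstar + 1) K, p i * ν i ^ 2 >
      4 * n ^ 2 * ∑ i ∈ Icc 1 L, p i := by
  have hp₀ : ∀ i ∈ Icc 1 K, 0 ≤ p i := fun i hi => (hp i hi).le
  have hpl : ∀ i ∈ Icc 1 L, 0 ≤ p i := fun i hi => hp₀ i (Icc_subset_Icc le_rfl hLK hi)
  have hpu : ∀ i ∈ Icc (L + 1) K, 0 ≤ p i :=
    fun i hi => hp₀ i (Icc_subset_Icc (Nat.le_add_left 1 L) le_rfl hi)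
  set c : ℕ → ℝ := fun i => if i ≤ Lstar then 2 else 1
  have hc : ∀ i, 1 ≤ c i := fun i => by dsimp only [c]; split_ifs <;> norm_num
  have hCS := sq_sum_mul_le_sum_mul_sq_mul_sum_div _ p c ν hp₀
    fun i _ => one_pos.trans_le (hc i)
  rw [sum_Icc_ite_le_mul 2 _ (hLsL.trans hLK)] at hCS
  have hW : ∑ i ∈ Icc 1 K, p i / c i ≤ ∑ i ∈ Icc 1 L, p i + ∑ i ∈ Icc (L + 1) K, p i := by
    rw [sum_Icc_consecutive _ (Nat.le_add_left 1 L) hLK]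
    exact sum_le_sum fun i hi => div_le_self (hp₀ i hi) (hc i)
  have hδ : 2 * ∑ i ∈ Icc 1 L, p i + ∑ i ∈ Icc (L + 1) K, p i ≤ ∑ i ∈ Icc 1 K, p i * δ i := by
    rw [← sum_Icc_consecutive _ (Nat.le_add_left 1 L) hLK, mul_sum]
    refine add_le_add (sum_le_sum fun i hi => ?_) (sum_le_sum fun i hi => ?_)
    · nlinarith [hδl i hi, hpl i hi]
    · exact le_mul_of_one_le_right (hpu i hi) (hδu i hi)
  exact four_mul_sq_mul_lt_of_sq_le hn (sum_nonneg hpl) (sum_nonneg hpu)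
    (sum_nonneg fun i hi => div_nonneg (hp₀ i hi) (zero_le_one.trans (hc i))) hW
    ((mul_le_mul_of_nonneg_left hδ hn).trans_lt hNF) hCS

/-- Let `K ≥ 1`, `p₁,…,p_K > 0`, `1 ≤ L* ≤ L ≤ K`,
`δ_i ≥ 2` for `i ≤ L`, `δ_i ≥ 1` for `L < i ≤ K`, `n ≥ 0`, and suppose the
Noether–Fano inequality `∑_{i=1}^K p_i ν_i > n·∑_{i=1}^K p_i δ_i` holds.
Then `2·∑_{i=1}^{L*} p_i ν_i² + ∑_{i=L*+1}^{K} p_i ν_i² > 4n²·∑_{i=1}^{L} p_i`. -/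
theorem stmt_6 (K Lstar L : ℕ) (hK : 1 ≤ K) (hLstar : 1 ≤ Lstar)
    (hLsL : Lstar ≤ L) (hLK : L ≤ K)
    (p δ ν : ℕ → ℝ)
    (hp : ∀ i ∈ Icc 1 K, 0 < p i)
    (hδl : ∀ i ∈ Icc 1 L, 2 ≤ δ i)
    (hδu : ∀ i ∈ Icc (L + 1) K, 1 ≤ δ i)
    (n : ℝ) (hn : 0 ≤ n)
    (hNF : ∑ i ∈ Icc 1 K, p i * ν i > n * ∑ i ∈ Icc 1 K, p i * δ i) :
    2 * ∑ i ∈ Icc 1 Lstar, p i * ν i ^ 2 +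
      ∑ i ∈ Icc (Lstar + 1) K, p i * ν i ^ 2 >
      4 * n ^ 2 * ∑ i ∈ Icc 1 L, p i :=
  stmt_6_general K Lstar L hLsL hLK p δ ν hp hδl hδu n hn hNF
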